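/- Let n and k be integers with 0 < k and 2k < n. There exists a constant c > 0, depending only on n and k, such that for every ε ∈ (0, ((n−2k)/n)^(1/(2k))), every Delaunay solution v with necksize ε, and every t ∈ ℝ, the following three estimates hold: |v(t) − ε^((n−2k)/(2k)) · cosh(((n−2k)/(2k)) t)| ≤ c · ε^((n+2k)/(2k)) · exp(((n+2k)/(2k)) |t|); |v'(t) − ((n−2k)/(2k)) · ε^((n−2k)/(2k)) · sinh(((n−2k)/(2k)) t)| ≤ c · ε^((n+2k)/(2k)) · exp(((n+2k)/(2k)) |t|); and |v''(t) − ((n−2k)/(2k))² · ε^((n−2k)/(2k)) · cosh(((n−2k)/(2k)) t)| ≤ c · ε^((n+2k)/(2k)) · exp(((n+2k)/(2k)) |t|). -/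

import Mathlib

/-!
Along a solution the Hamiltonian `Ham n k (v, v')` is constant, and at `t = 0` it equals
`e₀^(2k) − e₀^P ≥ 0`, where `e₀ = ε^A ≤ 1`, `A = (n−2k)/(2k)` and `P = 2kn/(n−2k) > 2k`. Hence
`v² − B² v'² ≥ v^(P/k) > 0` with `B = 1/A`, and dividing the ODE by `(v² − B² v'²)^(k−1)` gives
`0 ≤ A² v − v'' ≤ A² (n/(n−2k)) v^Q` with `Q = (n+2k)/(n−2k)`. The lower bound yields, by
comparison with `cosh`, `v ≤ e₀ cosh(A t) ≤ e₀ e^(At)` for `t ≥ 0`, so the defect `A² v − v''` is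
`O(ε^b e^(bt))` with `b = A Q = (n+2k)/(2k)`. Thus `u = v − e₀ cosh(A ·)` solves
`u'' − A² u = O(ε^b e^(bt))` with zero initial data, and integrating the two first-order factors of
`(d/dt + A)(d/dt − A)` in turn bounds `u`, `u'` and `u''`. Negative `t` follow by the reflection
`t ↦ −t`, which preserves Delaunay solutions.
-/

open Real

/-- The Delaunay ODE for the σₖ-curvature problem:
`(v² − (2k/(n−2k))² v'²)^(k−1) · (v − (2k/(n−2k))² v'') = (n/(n−2k)) · v^(2kn/(n−2k) − 1)`. -/
def DelaunayODE (n k : ℤ) (v : ℝ → ℝ) : Prop :=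
  ∀ t : ℝ,
    (v t ^ 2 - (2 * (k : ℝ) / ((n : ℝ) - 2 * k)) ^ 2 * deriv v t ^ 2) ^ (k.toNat - 1) *
        (v t - (2 * (k : ℝ) / ((n : ℝ) - 2 * k)) ^ 2 * deriv (deriv v) t) =
      (n : ℝ) / ((n : ℝ) - 2 * k) * v t ^ (2 * (k : ℝ) * n / ((n : ℝ) - 2 * k) - 1)

/-- The Hamiltonian `H(v,w) = (v² − (2k/(n−2k))² w²)^k − v^(2kn/(n−2k))`. -/
noncomputable def Ham (n k : ℤ) (v w : ℝ) : ℝ :=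
  (v ^ 2 - (2 * (k : ℝ) / ((n : ℝ) - 2 * k)) ^ 2 * w ^ 2) ^ k.toNat -
    v ^ (2 * (k : ℝ) * n / ((n : ℝ) - 2 * k))

/-- A Delaunay solution with necksize `ε`. -/
def IsDelaunay (n k : ℤ) (ε : ℝ) (v : ℝ → ℝ) : Prop :=
  ContDiff ℝ 2 v ∧ DelaunayODE n k v ∧ deriv v 0 = 0 ∧
    v 0 = ε ^ (((n : ℝ) - 2 * k) / (2 * k)) ∧
    ∀ t : ℝ, ε ^ (((n : ℝ) - 2 * k) / (2 * k)) ≤ v t ∧ v t ≤ 1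

theorem intCast_sub_two_mul_pos {n k : ℤ} (hnk : 2 * k < n) : (0 : ℝ) < n - 2 * k :=
  sub_pos.2 (by exact_mod_cast hnk)

theorem deriv_deriv_comp_neg (f : ℝ → ℝ) (x : ℝ) :
    deriv (deriv fun t => f (-t)) x = deriv (deriv f) (-x) := by
  rw [show (deriv fun t => f (-t)) = fun t => -deriv f (-t) from funext (deriv_comp_neg f),
    deriv.fun_neg, deriv_comp_neg, neg_neg]

theorem hasDerivAt_cosh_const_mul (A s : ℝ) :
    HasDerivAt (fun s => cosh (A * s)) (A * sinh (A * s)) s :=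
  ((hasDerivAt_id' s).const_mul A).cosh.congr_deriv (by ring)

theorem hasDerivAt_sinh_const_mul (A s : ℝ) :
    HasDerivAt (fun s => sinh (A * s)) (A * cosh (A * s)) s :=
  ((hasDerivAt_id' s).const_mul A).sinh.congr_deriv (by ring)

theorem cosh_le_exp_of_nonneg {x : ℝ} (hx : 0 ≤ x) : cosh x ≤ exp x := by
  rw [cosh_eq]
  linarith [exp_le_exp.2 (neg_le_self hx)]

theorem le_of_hasDerivAt_nonpos_of_nonneg {f f' : ℝ → ℝ} (hf : ∀ s, HasDerivAt f (f' s) s)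
    (hf' : ∀ s, 0 ≤ s → f' s ≤ 0) {t : ℝ} (ht : 0 ≤ t) : f t ≤ f 0 :=
  antitoneOn_of_hasDerivWithinAt_nonpos (convex_Ici 0)
    (fun s _ => (hf s).continuousAt.continuousWithinAt) (fun s _ => (hf s).hasDerivWithinAt)
    (fun s hs => hf' s (interior_subset hs)) Set.self_mem_Ici ht ht

theorem pos_of_continuous_of_ne_zero {f : ℝ → ℝ} (hf : Continuous f) (hne : ∀ x, f x ≠ 0)
    {a : ℝ} (ha : 0 < f a) (x : ℝ) : 0 < f x := by
  by_contra! hx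
  obtain ⟨y, -, hy⟩ := intermediate_value_uIcc (a := a) (b := x) hf.continuousOn
    (Set.mem_uIcc.2 (Or.inr ⟨hx, ha.le⟩))
  exact hne y hy

theorem abs_le_div_mul_exp_of_abs_deriv_le {g g' : ℝ → ℝ} {K b : ℝ} (hb : 0 < b)
    (hg : ∀ s, HasDerivAt g (g' s) s) (hg0 : g 0 = 0)
    (hbound : ∀ s, 0 ≤ s → |g' s| ≤ K * exp (b * s)) {t : ℝ} (ht : 0 ≤ t) :
    |g t| ≤ K / b * exp (b * t) := by
  have hK : 0 ≤ K := by simpa using (abs_nonneg _).trans (hbound 0 le_rfl)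
  have hB : ∀ s, HasDerivAt (fun s => K / b * exp (b * s)) (K * exp (b * s)) s := fun s =>
    (((hasDerivAt_id' s).const_mul b).exp.const_mul (K / b)).congr_deriv (by field_simp)
  exact image_norm_le_of_norm_deriv_right_le_deriv_boundary
    (fun s _ => (hg s).continuousAt.continuousWithinAt) (fun s _ => (hg s).hasDerivWithinAt)
    (by simp [hg0]; positivity) hB (fun s hs => hbound s hs.1) ⟨ht, le_rfl⟩

theorem abs_le_div_mul_exp_of_abs_deriv_add_mul_le {φ φ' : ℝ → ℝ} {a b K : ℝ} (hab : 0 < a + b)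
    (hφ : ∀ s, HasDerivAt φ (φ' s) s) (hφ0 : φ 0 = 0)
    (hbound : ∀ s, 0 ≤ s → |φ' s + a * φ s| ≤ K * exp (b * s)) {t : ℝ} (ht : 0 ≤ t) :
    |φ t| ≤ K / (a + b) * exp (b * t) := by
  have hG : ∀ s, HasDerivAt (fun s => exp (a * s) * φ s) (exp (a * s) * (φ' s + a * φ s)) s :=
    fun s => (((hasDerivAt_id' s).const_mul a).exp.mul (hφ s)).congr_deriv (by ring)
  have hG' : ∀ s, 0 ≤ s → |exp (a * s) * (φ' s + a * φ s)| ≤ K * exp ((a + b) * s) := by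
    intro s hs
    rw [abs_mul, abs_exp, add_mul, exp_add]
    nlinarith [hbound s hs, exp_pos (a * s)]
  have key := abs_le_div_mul_exp_of_abs_deriv_le hab hG (by simp [hφ0]) hG' ht
  rw [abs_mul, abs_exp, add_mul, exp_add, mul_left_comm] at key
  exact le_of_mul_le_mul_left key (exp_pos _)

theorem abs_le_of_abs_deriv2_sub_sq_mul_le {u u' u'' : ℝ → ℝ} {A b M : ℝ} (hA : 0 ≤ A)
    (hAb : A < b) (hu : ∀ s, HasDerivAt u (u' s) s) (hu' : ∀ s, HasDerivAt u' (u'' s) s)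
    (hu0 : u 0 = 0) (hu'0 : u' 0 = 0)
    (hbound : ∀ s, 0 ≤ s → |u'' s - A ^ 2 * u s| ≤ M * exp (b * s)) {t : ℝ} (ht : 0 ≤ t) :
    |u t| ≤ M / (b ^ 2 - A ^ 2) * exp (b * t) ∧
      |u' t| ≤ M * b / (b ^ 2 - A ^ 2) * exp (b * t) ∧
      |u'' t| ≤ M * b ^ 2 / (b ^ 2 - A ^ 2) * exp (b * t) := by
  have hsum : 0 < A + b := by linarith
  have hdiff : 0 < b - A := by linarith
  have hfactor : b ^ 2 - A ^ 2 = (A + b) * (b - A) := by ring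
  -- `u'' - A² u = (d/ds + A) (d/ds - A) u`: integrate one factor at a time
  have hw : ∀ s, 0 ≤ s → |u' s - A * u s| ≤ M / (A + b) * exp (b * s) := fun s hs =>
    abs_le_div_mul_exp_of_abs_deriv_add_mul_le (φ := fun s => u' s - A * u s) hsum
      (fun s => (hu' s).sub ((hu s).const_mul A)) (by simp [hu0, hu'0])
      (fun s hs => by convert hbound s hs using 2; ring) hs
  have hu_le : ∀ s, 0 ≤ s → |u s| ≤ M / (b ^ 2 - A ^ 2) * exp (b * s) := fun s hs => by
    have := abs_le_div_mul_exp_of_abs_deriv_add_mul_le (a := -A) (b := b) (by linarith) hu hu0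
      (fun s hs => by convert hw s hs using 2; ring) hs
    rwa [div_div, neg_add_eq_sub, ← hfactor] at this
  refine ⟨hu_le t ht, ?_, ?_⟩
  · calc |u' t| ≤ |u' t - A * u t| + A * |u t| := by
          have := abs_add_le (u' t - A * u t) (A * u t)
          rwa [sub_add_cancel, abs_mul, abs_of_nonneg hA] at this
      _ ≤ M / (A + b) * exp (b * t) + A * (M / (b ^ 2 - A ^ 2) * exp (b * t)) := by
          gcongr; exacts [hw t ht, hu_le t ht]
      _ = M * b / (b ^ 2 - A ^ 2) * exp (b * t) := by
          rw [hfactor]; field_simp; ring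
  · calc |u'' t| ≤ |u'' t - A ^ 2 * u t| + A ^ 2 * |u t| := by
          have := abs_add_le (u'' t - A ^ 2 * u t) (A ^ 2 * u t)
          rwa [sub_add_cancel, abs_mul, abs_of_nonneg (sq_nonneg A)] at this
      _ ≤ M * exp (b * t) + A ^ 2 * (M / (b ^ 2 - A ^ 2) * exp (b * t)) := by
          gcongr; exacts [hbound t ht, hu_le t ht]
      _ = M * b ^ 2 / (b ^ 2 - A ^ 2) * exp (b * t) := by
          rw [hfactor]; field_simp; ring

theorem le_mul_cosh_of_deriv2_le_sq_mul {v v' v'' : ℝ → ℝ} {A : ℝ}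
    (hv : ∀ s, HasDerivAt v (v' s) s) (hv' : ∀ s, HasDerivAt v' (v'' s) s) (hv'0 : v' 0 = 0)
    (hle : ∀ s, 0 ≤ s → v'' s ≤ A ^ 2 * v s) {t : ℝ} (ht : 0 ≤ t) :
    v t ≤ v 0 * cosh (A * t) := by
  -- the Wronskian of `v` and `cosh (A ·)` is nonincreasing and vanishes at `0`
  have hW : ∀ s, 0 ≤ s → v' s * cosh (A * s) - A * v s * sinh (A * s) ≤ 0 := fun s hs => by
    have := le_of_hasDerivAt_nonpos_of_nonneg
      (fun s => ((hv' s).mul (hasDerivAt_cosh_const_mul A s)).sub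
        (((hv s).const_mul A).mul (hasDerivAt_sinh_const_mul A s)))
      (fun s hs => by nlinarith [hle s hs, cosh_pos (A * s)]) hs
    simpa [hv'0] using this
  have hq := le_of_hasDerivAt_nonpos_of_nonneg
    (fun s => (hv s).div (hasDerivAt_cosh_const_mul A s) (cosh_pos _).ne')
    (fun s hs => div_nonpos_of_nonpos_of_nonneg (by nlinarith [hW s hs]) (sq_nonneg _)) ht
  simpa [div_le_iff₀ (cosh_pos _)] using hq

theorem nonneg_and_le_mul_rpow_of_pow_mul_eq {X d c w R : ℝ} {m : ℕ} (hw : 0 < w) (hc : 0 ≤ c)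
    (hX : w ^ R ≤ X) (h : X ^ m * d = c * w ^ (R * (m + 1) - 1)) :
    0 ≤ d ∧ d ≤ c * w ^ (R - 1) := by
  have hXm : 0 < X ^ m := pow_pos ((rpow_pos_of_pos hw R).trans_le hX) m
  have hsplit : w ^ (R * (m + 1) - 1) = w ^ (R - 1) * (w ^ R) ^ m := by
    rw [← rpow_natCast, ← rpow_mul hw.le, ← rpow_add hw]; ring_nf
  have hpow : (w ^ R) ^ m ≤ X ^ m := pow_le_pow_left₀ (rpow_nonneg hw.le R) hX m
  have hcw : 0 ≤ c * w ^ (R - 1) := mul_nonneg hc (rpow_nonneg hw.le _)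
  constructor
  · exact nonneg_of_mul_nonneg_right (h ▸ mul_nonneg hc (rpow_nonneg hw.le _)) hXm
  · refine le_of_mul_le_mul_left ?_ hXm
    rw [h, hsplit]
    nlinarith [mul_le_mul_of_nonneg_left hpow hcw]

theorem DelaunayODE.ham_eq {n k : ℤ} {v : ℝ → ℝ} (hk : 0 < k) (hv : ContDiff ℝ 2 v)
    (hode : DelaunayODE n k v) (hpos : ∀ t, 0 < v t) (t : ℝ) :
    Ham n k (v t) (deriv v t) = Ham n k (v 0) (deriv v 0) := by
  set B := 2 * (k : ℝ) / ((n : ℝ) - 2 * k)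
  set P := 2 * (k : ℝ) * n / ((n : ℝ) - 2 * k)
  have hP : P = 2 * k * ((n : ℝ) / ((n : ℝ) - 2 * k)) := by ring
  have hk' : ((k.toNat : ℕ) : ℝ) = k := by exact_mod_cast Int.toNat_of_nonneg hk.le
  -- `2 k v'` times the ODE is the derivative of `Ham` along the solution
  have hderiv : ∀ s, HasDerivAt (fun s => Ham n k (v s) (deriv v s)) 0 s := fun s => by
    have hv1 := (hv.differentiable (by norm_num) s).hasDerivAt
    have hv2 := (hv.differentiable_deriv_two s).hasDerivAt
    refine ((((hv1.fun_pow 2).fun_sub ((hv2.fun_pow 2).const_mul (B ^ 2))).fun_pow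
      k.toNat).fun_sub (hv1.rpow_const (p := P) (Or.inl (hpos s).ne'))).congr_deriv ?_
    rw [hk']
    linear_combination (2 * k * deriv v s) * hode s + (deriv v s * v s ^ (P - 1)) * hP
  exact is_const_of_deriv_eq_zero (fun s => (hderiv s).differentiableAt)
    (fun s => (hderiv s).deriv) t 0

/-- The factor `M b² / (b² − A²)` of `abs_le_of_abs_deriv2_sub_sq_mul_le`, divided by `ε^b`, for
`A = (n−2k)/(2k)`, `b = (n+2k)/(2k)` and the forcing bound `M = A² (n/(n−2k)) ε^b`. -/
noncomputable def delaunayConst (n k : ℤ) : ℝ :=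
  (((n : ℝ) - 2 * k) / (2 * k)) ^ 2 * ((n : ℝ) / ((n : ℝ) - 2 * k)) *
      (((n : ℝ) + 2 * k) / (2 * k)) ^ 2 /
    ((((n : ℝ) + 2 * k) / (2 * k)) ^ 2 - (((n : ℝ) - 2 * k) / (2 * k)) ^ 2)

theorem delaunayConst_pos {n k : ℤ} (hk : 0 < k) (hnk : 2 * k < n) : 0 < delaunayConst n k := by
  have hK : (0 : ℝ) < k := by exact_mod_cast hk
  have hNK := intCast_sub_two_mul_pos hnk
  have hA : 0 < ((n : ℝ) - 2 * k) / (2 * k) := by positivity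
  have hAb : ((n : ℝ) - 2 * k) / (2 * k) < ((n : ℝ) + 2 * k) / (2 * k) := by gcongr; linarith
  have hc : 0 < (n : ℝ) / ((n : ℝ) - 2 * k) := div_pos (by linarith) hNK
  exact div_pos (mul_pos (mul_pos (pow_pos hA 2) hc) (pow_pos (hA.trans hAb) 2))
    (sub_pos.2 (pow_lt_pow_left₀ hAb hA.le two_ne_zero))

namespace IsDelaunay

variable {n k : ℤ} {ε : ℝ} {v : ℝ → ℝ}

theorem comp_neg (hv : IsDelaunay n k ε v) : IsDelaunay n k ε (fun t => v (-t)) := by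
  obtain ⟨hreg, hode, hd0, hv0, hbnd⟩ := hv
  refine ⟨hreg.comp contDiff_neg, fun t => ?_, by simp [deriv_comp_neg, hd0], by simpa using hv0,
    fun t => hbnd (-t)⟩
  simpa [deriv_deriv_comp_neg, deriv_comp_neg, neg_sq] using hode (-t)

theorem rpow_le_sq_sub (hk : 0 < k) (hnk : 2 * k < n) (hε : 0 < ε) (hε1 : ε ≤ 1)
    (hv : IsDelaunay n k ε v) (t : ℝ) :
    v t ^ (2 * (n : ℝ) / ((n : ℝ) - 2 * k)) ≤
      v t ^ 2 - (2 * (k : ℝ) / ((n : ℝ) - 2 * k)) ^ 2 * deriv v t ^ 2 := by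
  obtain ⟨hreg, hode, hd0, hv0, hbnd⟩ := hv
  set e₀ := ε ^ (((n : ℝ) - 2 * k) / (2 * k))
  set X := fun t => v t ^ 2 - (2 * (k : ℝ) / ((n : ℝ) - 2 * k)) ^ 2 * deriv v t ^ 2
  set P := 2 * (k : ℝ) * n / ((n : ℝ) - 2 * k)
  have hNK := intCast_sub_two_mul_pos hnk
  have hk' : ((k.toNat : ℕ) : ℝ) = k := by exact_mod_cast Int.toNat_of_nonneg hk.le
  have he₀ : 0 < e₀ := rpow_pos_of_pos hε _
  have hpos : ∀ t, 0 < v t := fun t => he₀.trans_le (hbnd t).1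
  -- `Ham (v 0) 0 = e₀^(2k) − e₀^P ≥ 0` because `P > 2k` and `e₀ ≤ 1`
  have hHam : ∀ t, v t ^ P ≤ X t ^ k.toNat := fun t => by
    have h : X t ^ k.toNat - v t ^ P = (e₀ ^ 2) ^ k.toNat - e₀ ^ P := by
      simpa [Ham, hd0, hv0] using DelaunayODE.ham_eq hk hreg hode hpos t
    have h2k : e₀ ^ P ≤ (e₀ ^ 2) ^ k.toNat := by
      rw [← rpow_natCast, ← rpow_natCast, ← rpow_mul he₀.le, hk']
      refine rpow_le_rpow_of_exponent_ge he₀ (rpow_le_one hε.le hε1 (by positivity)) ?_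
      push_cast
      rw [le_div_iff₀ hNK]
      nlinarith
    linarith
  -- `X` never vanishes and `X 0 > 0`; for even `k` the sign of `X ^ k` alone says nothing
  have hX : ∀ t, 0 < X t :=
    pos_of_continuous_of_ne_zero ((hreg.continuous.pow 2).sub
        (continuous_const.mul ((hreg.continuous_deriv one_le_two).pow 2)))
      (fun t hXt => by
        have := hHam t
        rw [hXt, zero_pow (by omega)] at this
        exact (rpow_pos_of_pos (hpos t) P).not_ge this)
      (a := 0) (by simp [X, hd0, hv0, he₀])
  refine (pow_le_pow_iff_left₀ (rpow_nonneg (hpos t).le _) (hX t).le (n := k.toNat)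
    (by omega)).1 ?_
  rw [← rpow_natCast, ← rpow_mul (hpos t).le, hk', show 2 * (n : ℝ) / (n - 2 * k) * k = P by ring]
  exact hHam t

theorem sq_mul_sub_deriv_deriv_nonneg_and_le (hk : 0 < k) (hnk : 2 * k < n) (hε : 0 < ε) (hε1 : ε ≤ 1)
    (hv : IsDelaunay n k ε v) (t : ℝ) :
    0 ≤ (((n : ℝ) - 2 * k) / (2 * k)) ^ 2 * v t - deriv (deriv v) t ∧
      (((n : ℝ) - 2 * k) / (2 * k)) ^ 2 * v t - deriv (deriv v) t ≤
        (((n : ℝ) - 2 * k) / (2 * k)) ^ 2 * ((n : ℝ) / ((n : ℝ) - 2 * k)) *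
          v t ^ (((n : ℝ) + 2 * k) / ((n : ℝ) - 2 * k)) := by
  have hNK := intCast_sub_two_mul_pos hnk
  have hm : ((k.toNat - 1 : ℕ) : ℝ) + 1 = k := by
    rw [Nat.cast_sub (by omega), Nat.cast_one, sub_add_cancel]
    exact_mod_cast Int.toNat_of_nonneg hk.le
  have ⟨_, hode, _, _, hbnd⟩ := hv
  have hpos : 0 < v t := (rpow_pos_of_pos hε _).trans_le (hbnd t).1
  -- divide the ODE by `(v² − B² v'²)^(k−1) ≥ v^(2n(k−1)/(n−2k))`
  obtain ⟨hlow, hup⟩ := nonneg_and_le_mul_rpow_of_pow_mul_eq (m := k.toNat - 1)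
    (c := (n : ℝ) / ((n : ℝ) - 2 * k)) hpos (div_pos (by linarith) hNK).le
    (hv.rpow_le_sq_sub hk hnk hε hε1 t) (by
      rw [hm, show 2 * (n : ℝ) / (n - 2 * k) * k = 2 * k * n / (n - 2 * k) by ring]
      exact hode t)
  have hAB : (((n : ℝ) - 2 * k) / (2 * k)) ^ 2 * (2 * (k : ℝ) / ((n : ℝ) - 2 * k)) ^ 2 = 1 := by
    field_simp
  have hQ : 2 * (n : ℝ) / (n - 2 * k) - 1 = (n + 2 * k) / (n - 2 * k) := by
    field_simp; ring
  have hdefect : (((n : ℝ) - 2 * k) / (2 * k)) ^ 2 * v t - deriv (deriv v) t =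
      (((n : ℝ) - 2 * k) / (2 * k)) ^ 2 *
        (v t - (2 * (k : ℝ) / ((n : ℝ) - 2 * k)) ^ 2 * deriv (deriv v) t) := by
    linear_combination deriv (deriv v) t * hAB
  rw [hQ] at hup
  rw [hdefect, mul_assoc]
  exact ⟨mul_nonneg (sq_nonneg _) hlow, mul_le_mul_of_nonneg_left hup (sq_nonneg _)⟩

theorem le_rpow_mul_exp (hk : 0 < k) (hnk : 2 * k < n) (hε : 0 < ε) (hε1 : ε ≤ 1)
    (hv : IsDelaunay n k ε v) {t : ℝ} (ht : 0 ≤ t) :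
    v t ≤ ε ^ (((n : ℝ) - 2 * k) / (2 * k)) * exp (((n : ℝ) - 2 * k) / (2 * k) * t) := by
  have hK : (0 : ℝ) < k := by exact_mod_cast hk
  have hA : 0 < ((n : ℝ) - 2 * k) / (2 * k) := div_pos (intCast_sub_two_mul_pos hnk) (by linarith)
  have hdefect := hv.sq_mul_sub_deriv_deriv_nonneg_and_le hk hnk hε hε1
  obtain ⟨hreg, -, hd0, hv0, -⟩ := hv
  have hcosh := le_mul_cosh_of_deriv2_le_sq_mul (A := ((n : ℝ) - 2 * k) / (2 * k))
    (fun s => (hreg.differentiable (by norm_num) s).hasDerivAt)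
    (fun s => (hreg.differentiable_deriv_two s).hasDerivAt) hd0
    (fun s _ => by linarith [(hdefect s).1]) ht
  rw [hv0] at hcosh
  exact hcosh.trans (mul_le_mul_of_nonneg_left (cosh_le_exp_of_nonneg (mul_nonneg hA.le ht))
    (rpow_pos_of_pos hε _).le)

theorem sq_mul_sub_deriv_deriv_le_exp (hk : 0 < k) (hnk : 2 * k < n) (hε : 0 < ε) (hε1 : ε ≤ 1)
    (hv : IsDelaunay n k ε v) {t : ℝ} (ht : 0 ≤ t) :
    (((n : ℝ) - 2 * k) / (2 * k)) ^ 2 * v t - deriv (deriv v) t ≤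
      (((n : ℝ) - 2 * k) / (2 * k)) ^ 2 * ((n : ℝ) / ((n : ℝ) - 2 * k)) *
        (ε ^ (((n : ℝ) + 2 * k) / (2 * k)) * exp (((n : ℝ) + 2 * k) / (2 * k) * t)) := by
  have hK : (0 : ℝ) < k := by exact_mod_cast hk
  have hNK := intCast_sub_two_mul_pos hnk
  have hAQ : ((n : ℝ) - 2 * k) / (2 * k) * (((n : ℝ) + 2 * k) / ((n : ℝ) - 2 * k)) =
      ((n : ℝ) + 2 * k) / (2 * k) := by
    field_simp
  have hQ : 0 < ((n : ℝ) + 2 * k) / ((n : ℝ) - 2 * k) := div_pos (by linarith) hNK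
  have hvQ := rpow_le_rpow ((rpow_pos_of_pos hε _).trans_le (hv.2.2.2.2 t).1).le
    (hv.le_rpow_mul_exp hk hnk hε hε1 ht) hQ.le
  rw [mul_rpow (rpow_nonneg hε.le _) (exp_pos _).le, ← rpow_mul hε.le, ← exp_mul, hAQ,
    mul_right_comm, hAQ] at hvQ
  have hc : 0 < (n : ℝ) / ((n : ℝ) - 2 * k) := div_pos (by linarith) hNK
  exact (hv.sq_mul_sub_deriv_deriv_nonneg_and_le hk hnk hε hε1 t).2.trans
    (mul_le_mul_of_nonneg_left hvQ (mul_nonneg (sq_nonneg _) hc.le))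

theorem asymptotic_estimates_of_nonneg (hk : 0 < k) (hnk : 2 * k < n) (hε : 0 < ε) (hε1 : ε ≤ 1)
    (hv : IsDelaunay n k ε v) {t : ℝ} (ht : 0 ≤ t) :
    |v t - ε ^ (((n : ℝ) - 2 * k) / (2 * k)) * cosh (((n : ℝ) - 2 * k) / (2 * k) * t)| ≤
        delaunayConst n k * ε ^ (((n : ℝ) + 2 * k) / (2 * k)) *
          exp (((n : ℝ) + 2 * k) / (2 * k) * t) ∧
      |deriv v t - ((n : ℝ) - 2 * k) / (2 * k) * ε ^ (((n : ℝ) - 2 * k) / (2 * k)) *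
          sinh (((n : ℝ) - 2 * k) / (2 * k) * t)| ≤
        delaunayConst n k * ε ^ (((n : ℝ) + 2 * k) / (2 * k)) *
          exp (((n : ℝ) + 2 * k) / (2 * k) * t) ∧
      |deriv (deriv v) t - (((n : ℝ) - 2 * k) / (2 * k)) ^ 2 * ε ^ (((n : ℝ) - 2 * k) / (2 * k)) *
          cosh (((n : ℝ) - 2 * k) / (2 * k) * t)| ≤
        delaunayConst n k * ε ^ (((n : ℝ) + 2 * k) / (2 * k)) *
          exp (((n : ℝ) + 2 * k) / (2 * k) * t) := by
  have hK : (0 : ℝ) < k := by exact_mod_cast hk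
  have hNK := intCast_sub_two_mul_pos hnk
  have hdefect := hv.sq_mul_sub_deriv_deriv_nonneg_and_le hk hnk hε hε1
  have hforcing := fun s (hs : 0 ≤ s) => hv.sq_mul_sub_deriv_deriv_le_exp hk hnk hε hε1 hs
  obtain ⟨hreg, -, hd0, hv0, -⟩ := hv
  set A := ((n : ℝ) - 2 * k) / (2 * k)
  set b := ((n : ℝ) + 2 * k) / (2 * k)
  set e₀ := ε ^ A
  set M := A ^ 2 * ((n : ℝ) / ((n : ℝ) - 2 * k)) * ε ^ b
  have hA : 0 < A := by positivity
  have hb : b = A + 2 := by simp only [A, b]; field_simp; ring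
  have hM : 0 ≤ M := mul_nonneg (mul_nonneg (sq_nonneg A)
    (div_pos (by linarith : (0 : ℝ) < n) hNK).le) (rpow_pos_of_pos hε b).le
  have hD : 0 < b ^ 2 - A ^ 2 := by nlinarith
  have hweaken : ∀ x ≤ b ^ 2, M * x / (b ^ 2 - A ^ 2) * exp (b * t) ≤
      delaunayConst n k * ε ^ b * exp (b * t) := fun x hx => by
    rw [show delaunayConst n k * ε ^ b = M * b ^ 2 / (b ^ 2 - A ^ 2) by
      simp only [delaunayConst, M]; ring]
    gcongr
  obtain ⟨hu, hu', hu''⟩ := abs_le_of_abs_deriv2_sub_sq_mul_le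
    (u := fun s => v s - e₀ * cosh (A * s)) (u' := fun s => deriv v s - A * e₀ * sinh (A * s))
    (u'' := fun s => deriv (deriv v) s - A ^ 2 * e₀ * cosh (A * s)) (b := b) (M := M) hA.le
    (by linarith)
    (fun s => ((hreg.differentiable (by norm_num) s).hasDerivAt.fun_sub
      ((hasDerivAt_cosh_const_mul A s).const_mul e₀)).congr_deriv (by ring))
    (fun s => ((hreg.differentiable_deriv_two s).hasDerivAt.fun_sub
      ((hasDerivAt_sinh_const_mul A s).const_mul (A * e₀))).congr_deriv (by ring))
    (by simp [hv0, e₀]) (by simp [hd0])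
    (fun s hs => by
      rw [show ∀ x y : ℝ, x - A ^ 2 * e₀ * y - A ^ 2 * (v s - e₀ * y) = -(A ^ 2 * v s - x) by
        intros; ring, abs_neg, abs_of_nonneg (hdefect s).1]
      exact (hforcing s hs).trans_eq (by simp only [M]; ring)) ht
  exact ⟨hu.trans (by simpa using hweaken 1 (by nlinarith)), hu'.trans (hweaken b (by nlinarith)),
    hu''.trans (hweaken _ le_rfl)⟩

end IsDelaunay

theorem delaunay_asymptotic_estimates
    (n k : ℤ) (hk : 0 < k) (hnk : 2 * k < n) :
    ∃ c : ℝ, 0 < c ∧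
      ∀ ε : ℝ, 0 < ε → ε < (((n : ℝ) - 2 * k) / n) ^ (1 / (2 * (k : ℝ))) →
        ∀ v : ℝ → ℝ, IsDelaunay n k ε v →
          ∀ t : ℝ,
            |v t - ε ^ (((n : ℝ) - 2 * k) / (2 * k)) *
                Real.cosh (((n : ℝ) - 2 * k) / (2 * k) * t)| ≤
              c * ε ^ (((n : ℝ) + 2 * k) / (2 * k)) *
                Real.exp (((n : ℝ) + 2 * k) / (2 * k) * |t|) ∧
            |deriv v t - ((n : ℝ) - 2 * k) / (2 * k) *
                ε ^ (((n : ℝ) - 2 * k) / (2 * k)) *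
                Real.sinh (((n : ℝ) - 2 * k) / (2 * k) * t)| ≤
              c * ε ^ (((n : ℝ) + 2 * k) / (2 * k)) *
                Real.exp (((n : ℝ) + 2 * k) / (2 * k) * |t|) ∧
            |deriv (deriv v) t - (((n : ℝ) - 2 * k) / (2 * k)) ^ 2 *
                ε ^ (((n : ℝ) - 2 * k) / (2 * k)) *
                Real.cosh (((n : ℝ) - 2 * k) / (2 * k) * t)| ≤
              c * ε ^ (((n : ℝ) + 2 * k) / (2 * k)) *
                Real.exp (((n : ℝ) + 2 * k) / (2 * k) * |t|) := by
  refine ⟨delaunayConst n k, delaunayConst_pos hk hnk, fun ε hε hε1 v hv t => ?_⟩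
  have hK : (0 : ℝ) < k := by exact_mod_cast hk
  have hNK := intCast_sub_two_mul_pos hnk
  have hN : (0 : ℝ) < n := by linarith
  have hε1' : ε ≤ 1 := hε1.le.trans (rpow_le_one (div_nonneg hNK.le hN.le)
    ((div_le_one hN).2 (by linarith)) (by positivity))
  rcases le_total 0 t with ht | ht
  · simpa only [abs_of_nonneg ht] using hv.asymptotic_estimates_of_nonneg hk hnk hε hε1' ht
  · obtain ⟨h0, h1, h2⟩ := hv.comp_neg.asymptotic_estimates_of_nonneg hk hnk hε hε1' (neg_nonneg.2 ht)
    simp only [deriv_comp_neg, deriv_deriv_comp_neg, neg_neg, mul_neg, cosh_neg, sinh_neg,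
      neg_sub_neg] at h0 h1 h2
    rw [abs_of_nonpos ht, mul_neg]
    exact ⟨h0, abs_sub_comm (deriv v t) _ ▸ h1, h2⟩
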